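/- arXiv:1005.1006 — 2 statements merged into one kernel-verified Lean document; each statement's English description precedes it below -/
import Mathlib

section
/- Let D_t = ∫₀ᵗ e^{-sA} T e^{-sA†} ds where A is an N×N complex matrix and T is a positive semidefinite N×N matrix. If the columns of the matrices {Aⁿ √T : n = 0, 1, 2, ...} span ℂᴺ, then D_t is a positive definite (hence invertible) self-adjoint matrix for every t > 0. -/
open MeasureTheory Matrix
open scoped ComplexOrder

/-!
Writing `T = S Sᴴ`, the quadratic form of `D t` is `x ↦ ∫₀ᵗ ‖S e^{-sA†} x‖² ds`, whose
integrand is continuous and nonnegative. If it vanishes, then `S e^{-sA†} x = 0` on `(0, t)`;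
differentiating `k` times gives `S (A†)ᵏ e^{-sA†} x = 0`, so `e^{-sA†} x` is orthogonal to every
column of `Aᵏ S`. By the Kalman condition `e^{-sA†} x = 0`, and `x = 0` since `e^{-sA†}` is
invertible.
-/

open NormedSpace Set

theorem eq_zero_of_forall_conjTranspose_mulVec_eq_zero {ι m n : Type*} [Fintype m]
    (M : ι → Matrix m n ℂ)
    (hspan : Submodule.span ℂ {v : m → ℂ | ∃ k j, v = fun i => M k i j} = ⊤)
    {y : m → ℂ} (hy : ∀ k, (M k)ᴴ *ᵥ y = 0) : y = 0 := by
  have hφ : dotProductBilin ℂ ℂ (star y) = 0 := by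
    refine LinearMap.ext_on hspan ?_
    rintro _ ⟨k, j, rfl⟩
    have := congrArg (fun v : n → ℂ => star (v j)) (hy k)
    simpa [dotProduct, mulVec, conjTranspose_apply, mul_comm, star_sum] using this
  exact dotProduct_star_self_eq_zero.mp (LinearMap.congr_fun hφ y)

section Exponential

variable {n : Type*} [Fintype n] [DecidableEq n]

theorem hasDerivAt_mul_exp_neg_smul_mulVec (C B : Matrix n n ℂ) (x : n → ℂ) (s : ℝ) :
    HasDerivAt (fun u : ℝ => (C * exp ((-u) • B)) *ᵥ x)
      (-((C * B * exp ((-s) • B)) *ᵥ x)) s := by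
  open scoped Matrix.Norms.Operator in
  have h := ((mulVecBilin ℝ ℂ).flip x).toContinuousLinearMap.hasFDerivAt.comp_hasDerivAt s
    (((hasDerivAt_exp_smul_const' B (-s)).scomp s (hasDerivAt_neg s)).const_mul C)
  refine h.congr_deriv ?_
  simp only [neg_smul, one_smul, Matrix.mul_assoc, Matrix.mul_neg]
  exact neg_mulVec x (C * (B * exp (-(s • B))))

theorem continuous_exp_neg_smul (B : Matrix n n ℂ) :
    Continuous fun u : ℝ => exp ((-u) • B) := by
  open scoped Matrix.Norms.Operator in
  exact (differentiable_exp_smul_const ℝ B).continuous.comp continuous_neg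

theorem mul_pow_mul_exp_neg_smul_mulVec_eq_zero {U : Set ℝ} (hU : IsOpen U)
    {C B : Matrix n n ℂ} {x : n → ℂ} (h : ∀ s ∈ U, (C * exp ((-s) • B)) *ᵥ x = 0) (k : ℕ) :
    ∀ s ∈ U, (C * B ^ k * exp ((-s) • B)) *ᵥ x = 0 := by
  induction k with
  | zero => simpa using h
  | succ k ih =>
    intro s hs
    have hzero : (fun u : ℝ => (C * B ^ k * exp ((-u) • B)) *ᵥ x) =ᶠ[nhds s] fun _ => 0 :=
      Filter.eventually_of_mem (hU.mem_nhds hs) ih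
    have hderiv := (hasDerivAt_mul_exp_neg_smul_mulVec (C * B ^ k) B x s).unique
      ((hasDerivAt_const s 0).congr_of_eventuallyEq hzero)
    rw [pow_succ, ← Matrix.mul_assoc]
    rwa [neg_eq_zero] at hderiv

theorem eq_zero_of_forall_conjTranspose_exp_mul_mulVec_eq_zero {A S : Matrix n n ℂ}
    (hspan : Submodule.span ℂ {v : n → ℂ | ∃ k j, v = fun i => (A ^ k * S) i j} = ⊤)
    {U : Set ℝ} (hU : IsOpen U) (hUne : U.Nonempty) {x : n → ℂ}
    (h : ∀ s ∈ U, (exp ((-s) • A) * S)ᴴ *ᵥ x = 0) : x = 0 := by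
  have hconj (s : ℝ) : (exp ((-s) • A) * S)ᴴ = Sᴴ * exp ((-s) • Aᴴ) := by
    rw [conjTranspose_mul, ← exp_conjTranspose, conjTranspose_smul, star_trivial]
  obtain ⟨s₀, hs₀⟩ := hUne
  have hy : exp ((-s₀) • Aᴴ) *ᵥ x = 0 := by
    refine eq_zero_of_forall_conjTranspose_mulVec_eq_zero (fun k => A ^ k * S) hspan fun k => ?_
    rw [mulVec_mulVec, conjTranspose_mul, conjTranspose_pow]
    exact mul_pow_mul_exp_neg_smul_mulVec_eq_zero hU (fun s hs => hconj s ▸ h s hs) k s₀ hs₀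
  have hinj := mulVec_injective_iff_isUnit.2 (isUnit_exp ((-s₀) • Aᴴ))
  exact hinj (hy.trans (mulVec_zero _).symm)

end Exponential

section IntervalIntegral

variable {m n : Type*}

theorem isHermitian_of_intervalIntegral {F : ℝ → Matrix n n ℂ} (hF : ∀ s, (F s).IsHermitian)
    (a b : ℝ) : (of fun i j => ∫ s in a..b, F s i j).IsHermitian := by
  refine IsHermitian.ext fun i j => ?_
  simp only [of_apply, Complex.star_def, ← intervalIntegral.intervalIntegral_conj]
  exact intervalIntegral.integral_congr fun s _ => (hF s).apply i j

variable [Fintype m] [Fintype n]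

theorem dotProduct_mulVec_of_intervalIntegral {F : ℝ → Matrix n n ℂ} (hF : Continuous F)
    (x : n → ℂ) (a b : ℝ) :
    star x ⬝ᵥ (of (fun i j => ∫ s in a..b, F s i j) *ᵥ x)
      = ∫ s in a..b, star x ⬝ᵥ (F s *ᵥ x) := by
  simp only [dotProduct, mulVec, of_apply, Pi.star_apply]
  simp_rw [Finset.mul_sum]
  rw [intervalIntegral.integral_finsetSum fun i _ =>
    (by fun_prop : Continuous _).intervalIntegrable _ _]
  refine Finset.sum_congr rfl fun i _ => ?_
  rw [intervalIntegral.integral_finsetSum fun j _ =>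
    (by fun_prop : Continuous _).intervalIntegrable _ _]
  refine Finset.sum_congr rfl fun j _ => ?_
  rw [intervalIntegral.integral_const_mul, intervalIntegral.integral_mul_const]

theorem intervalIntegral_pos_of_continuous_of_nonneg {g : ℝ → ℝ} (hg : Continuous g)
    (hg₀ : 0 ≤ g) {a b s : ℝ} (hs : s ∈ Ioo a b) (hgs : 0 < g s) : 0 < ∫ u in a..b, g u := by
  rw [intervalIntegral.integral_pos_iff_support_of_nonneg_ae (.of_forall hg₀)
    (hg.intervalIntegrable a b)]
  refine ⟨hs.1.trans hs.2, ?_⟩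
  have hopen : IsOpen (Function.support g ∩ Ioo a b) := hg.isOpen_support.inter isOpen_Ioo
  exact (hopen.measure_pos volume ⟨s, hgs.ne', hs⟩).trans_le
    (measure_mono (inter_subset_inter_right _ Ioo_subset_Ioc_self))

theorem posDef_of_intervalIntegral_mul_conjTranspose {M : ℝ → Matrix n m ℂ} (hM : Continuous M)
    {a b : ℝ} (h : ∀ x ≠ 0, ∃ s ∈ Ioo a b, (M s)ᴴ *ᵥ x ≠ 0) :
    (of fun i j => ∫ s in a..b, (M s * (M s)ᴴ) i j).PosDef := by
  refine .of_dotProduct_mulVec_pos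
    (isHermitian_of_intervalIntegral (fun s => isHermitian_mul_conjTranspose_self _) a b)
    fun x hx => ?_
  obtain ⟨s₀, hs₀, hne⟩ := h x hx
  set g : ℝ → ℝ := fun s => (star ((M s)ᴴ *ᵥ x) ⬝ᵥ ((M s)ᴴ *ᵥ x)).re
  have hg (s : ℝ) : star x ⬝ᵥ ((M s * (M s)ᴴ) *ᵥ x) = g s := by
    rw [← mulVec_mulVec, dotProduct_mulVec, ← conjTranspose_conjTranspose (M s), ← star_mulVec,
      conjTranspose_conjTranspose]
    exact Complex.eq_re_of_ofReal_le (r := 0) (by simp [dotProduct_star_self_nonneg])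
  rw [dotProduct_mulVec_of_intervalIntegral (hM.matrix_mul hM.matrix_conjTranspose),
    intervalIntegral.integral_congr fun s _ => hg s, intervalIntegral.integral_ofReal,
    Complex.zero_lt_real]
  refine intervalIntegral_pos_of_continuous_of_nonneg (by fun_prop) (fun s => ?_) hs₀ ?_
  · exact (Complex.nonneg_iff.mp (dotProduct_star_self_nonneg _)).1
  · exact (Complex.pos_iff.mp (dotProduct_star_self_pos_iff.mpr hne)).1

end IntervalIntegral

theorem stmt0_general (N : ℕ) (A T S : Matrix (Fin N) (Fin N) ℂ)
    (hS : S.PosSemidef) (hST : S * S = T)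
    (hspan : Submodule.span ℂ
      {v : Fin N → ℂ | ∃ (n : ℕ) (j : Fin N), v = fun i => (A ^ n * S) i j} = ⊤)
    (D : ℝ → Matrix (Fin N) (Fin N) ℂ)
    (hD : ∀ t, D t = Matrix.of fun i j => ∫ s in (0:ℝ)..t,
      (NormedSpace.exp ((-s) • A) * T * NormedSpace.exp ((-s) • Aᴴ)) i j)
    (t : ℝ) (ht : 0 < t) :
    (D t).PosDef ∧ (D t).IsHermitian ∧ IsUnit (D t) := by
  have hgram (s : ℝ) : exp ((-s) • A) * T * exp ((-s) • Aᴴ)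
      = exp ((-s) • A) * S * (exp ((-s) • A) * S)ᴴ := by
    rw [conjTranspose_mul, hS.1, ← exp_conjTranspose, conjTranspose_smul, star_trivial, ← hST]
    simp only [Matrix.mul_assoc]
  have hpos : (D t).PosDef := by
    simp_rw [hD t, hgram]
    refine posDef_of_intervalIntegral_mul_conjTranspose
      ((continuous_exp_neg_smul A).matrix_mul continuous_const) fun x hx => ?_
    by_contra! h
    exact hx (eq_zero_of_forall_conjTranspose_exp_mul_mulVec_eq_zero hspan isOpen_Ioo
      (nonempty_Ioo.2 ht) h)
  exact ⟨hpos, hpos.isHermitian, hpos.isUnit⟩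

/-- Let `D t = ∫₀ᵗ e^{-sA} T e^{-sA†} ds` (defined entrywise), where `A` is an
`N×N` complex matrix and `T` is positive semidefinite with positive semidefinite square root
`S = √T`.  If the columns of the matrices `Aⁿ √T`, `n = 0, 1, 2, ...` span `ℂᴺ` (Kalman
controllability), then `D t` is positive definite (hence invertible) and self-adjoint for
every `t > 0`. -/
theorem stmt0 (N : ℕ) (A T S : Matrix (Fin N) (Fin N) ℂ)
    (hT : T.PosSemidef) (hS : S.PosSemidef) (hST : S * S = T)
    (hspan : Submodule.span ℂ
      {v : Fin N → ℂ | ∃ (n : ℕ) (j : Fin N), v = fun i => (A ^ n * S) i j} = ⊤)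
    (D : ℝ → Matrix (Fin N) (Fin N) ℂ)
    (hD : ∀ t, D t = Matrix.of fun i j => ∫ s in (0:ℝ)..t,
      (NormedSpace.exp ((-s) • A) * T * NormedSpace.exp ((-s) • Aᴴ)) i j)
    (t : ℝ) (ht : 0 < t) :
    (D t).PosDef ∧ (D t).IsHermitian ∧ IsUnit (D t) :=
  stmt0_general N A T S hS hST hspan D hD t ht
end

section
/- Fix a positive integer M. Suppose α₁, α₂ : ℤ → ℂ are the Fourier coefficient sequences of two real functions on [0,2π] (so α_i(-m) = conj(α_i(m))), all coefficients α_i(m) are nonzero for |m| ≤ M, and for each m with 1 ≤ m ≤ M the vectors (α₁(m), α₁(-m)) and (α₂(m), α₂(-m)) in ℂ² are linearly independent. Then the family of vectors { (((-m²-1)ᵏ α_i(m))_{|m| ≤ M}) : k ∈ ℕ, i ∈ {1,2} } spans the space ℂ^{2M+1} of Fourier coefficient sequences supported on {|m| ≤ M}. -/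
/-!
A linear functional vanishing on all the vectors `((-m² - 1)ᵏ αᵢ(m))_m` is given by weights `c`
with `∑ₘ c(m) αᵢ(m) λₘᵏ = 0` for every `k`, where `λₘ = -m² - 1`. By Vandermonde (Lagrange
interpolation) the sum of `c(m) αᵢ(m)` over each level set of `λ` vanishes. The level sets are
`{m, -m}`, so for `m ≠ 0` the pair `(c(m), c(-m))` lies in the kernel of the invertible matrix
with rows `(αᵢ(m), αᵢ(-m))`, while `c(0) αᵢ(0) = 0` with `αᵢ(0) ≠ 0`. Hence `c = 0`.
-/

open Finset Polynomial

section Vandermonde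

variable {K : Type*} [Field K] [DecidableEq K]

theorem eq_zero_of_forall_sum_mul_pow_eq_zero {s : Finset K} {f : K → K}
    (h : ∀ k : ℕ, ∑ x ∈ s, f x * x ^ k = 0) : ∀ x ∈ s, f x = 0 := by
  have hpoly : ∀ p : K[X], ∑ x ∈ s, f x * p.eval x = 0 := fun p => by
    simp_rw [eval_eq_sum_range, mul_sum]
    rw [sum_comm]
    refine sum_eq_zero fun n _ => ?_
    simp_rw [mul_left_comm (f _), ← mul_sum, h n, mul_zero]
  intro x hx
  have hbasis := hpoly (Lagrange.basis s id x)
  have hself : (Lagrange.basis s id x).eval x = 1 :=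
    Lagrange.eval_basis_self Function.injective_id.injOn hx
  have hother : ∀ y ∈ s, y ≠ x → (Lagrange.basis s id x).eval y = 0 :=
    fun y hy hyx => Lagrange.eval_basis_of_ne (v := id) hyx.symm hy
  rwa [sum_eq_single_of_mem x hx fun y hy hyx => by rw [hother y hy hyx, mul_zero], hself,
    mul_one] at hbasis

theorem sum_filter_eq_zero_of_forall_sum_mul_pow_eq_zero {ι : Type*} {s : Finset ι}
    {f v : ι → K} (h : ∀ k : ℕ, ∑ i ∈ s, f i * v i ^ k = 0) (μ : K) :
    ∑ i ∈ s with v i = μ, f i = 0 := by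
  -- inserting `μ` covers the case where `μ` is not a value of `v` (the fiber is then empty)
  refine eq_zero_of_forall_sum_mul_pow_eq_zero (s := insert μ (s.image v))
    (f := fun μ => ∑ i ∈ s with v i = μ, f i) (fun k => ?_) μ (mem_insert_self _ _)
  rw [← h k, ← sum_fiberwise_of_maps_to fun i hi => mem_insert_of_mem (mem_image_of_mem v hi)]
  refine sum_congr rfl fun ν _ => ?_
  rw [sum_mul]
  exact sum_congr rfl fun i hi => by rw [(mem_filter.mp hi).2]

end Vandermonde

section Span

variable {α K : Type*} [Field K]

theorem span_eq_top_of_forall_sum_mul_eq_zero (s : Finset α) {S : Set (s → K)}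
    (h : ∀ c : α → K, (∀ v ∈ S, ∑ i : s, c i * v i = 0) → ∀ a ∈ s, c a = 0) :
    Submodule.span K S = ⊤ := by
  classical
  refine Subspace.dualAnnihilator_inj.mp ?_
  rw [Submodule.dualAnnihilator_top, eq_bot_iff]
  intro φ hφ
  rw [Submodule.mem_dualAnnihilator] at hφ
  let c : α → K := fun a => if ha : a ∈ s then φ (fun j => if ⟨a, ha⟩ = j then 1 else 0) else 0
  have hφc : ∀ v : s → K, φ v = ∑ i : s, c i * v i := fun v => by
    rw [LinearMap.pi_apply_eq_sum_univ φ v]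
    refine sum_congr rfl fun i _ => ?_
    simp [c, mul_comm]
  have hc := h c fun v hv => (hφc v).symm.trans (hφ v (Submodule.subset_span hv))
  refine (Submodule.mem_bot K).mpr (LinearMap.ext fun v => ?_)
  rw [hφc v]
  simp [hc _ (coe_mem _)]

theorem span_pow_mul_eq_top [DecidableEq K] {J : Type*} (s : Finset α) (lam : α → K)
    (β : J → α → K)
    (h : ∀ c : α → K, (∀ j μ, ∑ i ∈ s with lam i = μ, c i * β j i = 0) → ∀ a ∈ s, c a = 0) :
    Submodule.span K {v : s → K | ∃ (k : ℕ) (j : J), v = fun i : s => lam i ^ k * β j i} = ⊤ := by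
  refine span_eq_top_of_forall_sum_mul_eq_zero s fun c hc => h c fun j μ => ?_
  refine sum_filter_eq_zero_of_forall_sum_mul_pow_eq_zero (fun k => ?_) μ
  rw [← hc _ ⟨k, j, rfl⟩, ← sum_coe_sort s]
  exact sum_congr rfl fun i _ => by ring

end Span

theorem eq_zero_of_linearIndependent_rows {K : Type*} [Field K] {a b c d x y : K}
    (h : LinearIndependent K ![![a, b], ![c, d]])
    (h₁ : x * a + y * b = 0) (h₂ : x * c + y * d = 0) : x = 0 ∧ y = 0 := by
  have hA : IsUnit !![a, b; c, d] := Matrix.linearIndependent_rows_iff_isUnit.mp h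
  have hxy : ![x, y] = 0 := Matrix.mulVec_injective_iff_isUnit.mpr hA <| by
    ext i
    fin_cases i
    · simpa [Matrix.mulVec, dotProduct, mul_comm] using h₁
    · simpa [Matrix.mulVec, dotProduct, mul_comm] using h₂
  exact ⟨congrFun hxy 0, congrFun hxy 1⟩

theorem filter_neg_sq_sub_one_eq_pair (M : ℕ) {m : ℤ} (hm : m ∈ Icc (-(M : ℤ)) M) :
    {n ∈ Icc (-(M : ℤ)) M | -(((n : ℤ) : ℂ)) ^ 2 - 1 = -((m : ℂ)) ^ 2 - 1} = {m, -m} := by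
  rw [mem_Icc] at hm
  ext n
  have hsq : -((n : ℂ)) ^ 2 - 1 = -((m : ℂ)) ^ 2 - 1 ↔ n = m ∨ n = -m := by
    rw [sub_left_inj, neg_inj, ← sq_eq_sq_iff_eq_or_eq_neg]
    exact_mod_cast Iff.rfl
  simp only [mem_filter, mem_Icc, hsq, mem_insert, mem_singleton]
  omega

theorem stmt2_general (M : ℕ) (α : Fin 2 → ℤ → ℂ)
    (hne : ∀ i, ∀ m : ℤ, |m| ≤ (M : ℤ) → α i m ≠ 0)
    (hindep : ∀ m : ℤ, 1 ≤ m → m ≤ (M : ℤ) →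
      LinearIndependent ℂ ![![α 0 m, α 0 (-m)], ![α 1 m, α 1 (-m)]]) :
    Submodule.span ℂ
      {v : ↥(Finset.Icc (-(M:ℤ)) M) → ℂ |
        ∃ (k : ℕ) (i : Fin 2), v = fun m : ↥(Finset.Icc (-(M:ℤ)) (M:ℤ)) => (-(((m : ℤ) : ℂ))^2 - 1)^k * α i (m : ℤ)} = ⊤ := by
  refine span_pow_mul_eq_top _ (fun m : ℤ => -((m : ℂ)) ^ 2 - 1) α fun c hc m hm => ?_
  have hfiber : ∀ j, ∀ n ∈ Icc (-(M : ℤ)) M, ∑ l ∈ {n, -n}, c l * α j l = 0 :=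
    fun j n hn => filter_neg_sq_sub_one_eq_pair M hn ▸ hc j _
  have hpair : ∀ n : ℤ, 1 ≤ n → n ≤ M → c n = 0 ∧ c (-n) = 0 := fun n h₁ h₂ => by
    have hsum : ∀ j, c n * α j n + c (-n) * α j (-n) = 0 := fun j => by
      rw [← sum_pair (f := fun n => c n * α j n) (show n ≠ -n by omega)]
      exact hfiber j n (mem_Icc.mpr ⟨by omega, h₂⟩)
    exact eq_zero_of_linearIndependent_rows (hindep n h₁ h₂) (hsum 0) (hsum 1)
  rw [mem_Icc] at hm
  rcases lt_trichotomy m 0 with hm₀ | rfl | hm₀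
  · simpa using (hpair (-m) (by omega) (by omega)).2
  · have hzero : c 0 * α 0 0 = 0 := by simpa using hfiber 0 0 (by simp)
    exact (mul_eq_zero.mp hzero).resolve_right (hne 0 0 (by simp))
  · exact (hpair m hm₀ hm.2).1

/-- Fix a positive integer `M`.  Suppose `α₁, α₂ : ℤ → ℂ` are Fourier coefficient
sequences of real functions (so `αᵢ(-m) = conj (αᵢ(m))`), all coefficients `αᵢ(m)` are nonzero
for `|m| ≤ M`, and for each `1 ≤ m ≤ M` the vectors `(α₁(m), α₁(-m))` and `(α₂(m), α₂(-m))`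
in `ℂ²` are linearly independent.  Then the family
`{ ((-m²-1)ᵏ αᵢ(m))_{|m| ≤ M} : k ∈ ℕ, i ∈ {1,2} }` spans `ℂ^{2M+1}`, the space of Fourier
coefficient sequences supported on `{|m| ≤ M}`. -/
theorem stmt2 (M : ℕ) (hM : 0 < M) (α : Fin 2 → ℤ → ℂ)
    (hreal : ∀ i m, α i (-m) = starRingEnd ℂ (α i m))
    (hne : ∀ i, ∀ m : ℤ, |m| ≤ (M : ℤ) → α i m ≠ 0)
    (hindep : ∀ m : ℤ, 1 ≤ m → m ≤ (M : ℤ) →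
      LinearIndependent ℂ ![![α 0 m, α 0 (-m)], ![α 1 m, α 1 (-m)]]) :
    Submodule.span ℂ
      {v : ↥(Finset.Icc (-(M:ℤ)) M) → ℂ |
        ∃ (k : ℕ) (i : Fin 2), v = fun m : ↥(Finset.Icc (-(M:ℤ)) (M:ℤ)) => (-(((m : ℤ) : ℂ))^2 - 1)^k * α i (m : ℤ)} = ⊤ :=
  stmt2_general M α hne hindep
end
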